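/- In the well-pointed endofunctor setting below, for every object X of C the morphism α.app (T X) : T X ⟶ U (T X) is an isomorphism; consequently, for every n ≥ 0 the transition map α.app (Uⁿ (T X)) : Uⁿ (T X) ⟶ U^{n+1} (T X) is an isomorphism, i.e. every map in the chain T X → U (T X) → U² (T X) → ⋯ is an isomorphism. (This is the paper's claim that the canonical maps T → U ∘ T → U² ∘ T → ⋯ are all equivalences.) -/

import Mathlib

open CategoryTheory CategoryTheory.Limits

universe v u

variable {C : Type u} [Category.{v} C]

def funIter (U : C ⥤ C) : ℕ → C ⥤ C
  | 0 => 𝟭 C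
  | n + 1 => funIter U n ⋙ U

lemma funIter_obj_comm (U : C ⥤ C) (n : ℕ) (X : C) :
    (funIter U n).obj (U.obj X) = U.obj ((funIter U n).obj X) := by
  induction n with
  | zero => rfl
  | succ n ih =>
      show U.obj ((funIter U n).obj (U.obj X)) = U.obj (U.obj ((funIter U n).obj X))
      rw [ih]

/-- The chain `X ⟶ U X ⟶ U² X ⟶ ⋯` with transition maps `α.app (Uⁿ X)`. -/
def chain (U : C ⥤ C) (α : 𝟭 C ⟶ U) (A : C) : ℕ ⥤ C :=
  Functor.ofSequence (X := fun n => (funIter U n).obj A)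
    (fun n => α.app ((funIter U n).obj A))

/-- The functorial action of the chain construction. -/
def chainMap (U : C ⥤ C) (α : 𝟭 C ⟶ U) {A B : C} (f : A ⟶ B) :
    chain U α A ⟶ chain U α B :=
  NatTrans.ofSequence (F := chain U α A) (G := chain U α B)
    (fun n => (funIter U n).map f)
    (fun n => by
      simp only [chain]
      erw [Functor.ofSequence_map_homOfLE_succ, Functor.ofSequence_map_homOfLE_succ]
      exact (α.naturality ((funIter U n).map f)).symm)

variable [HasColimitsOfShape ℕ C]

/-- `T X`, the colimit of the chain `X ⟶ U X ⟶ U² X ⟶ ⋯`. -/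
noncomputable def Tobj (U : C ⥤ C) (α : 𝟭 C ⟶ U) (A : C) : C :=
  colimit (chain U α A)

/-- The action of `T` on morphisms. -/
noncomputable def Tmap (U : C ⥤ C) (α : 𝟭 C ⟶ U) {A B : C} (f : A ⟶ B) :
    Tobj U α A ⟶ Tobj U α B :=
  colimMap (chainMap U α f)

/-- The component `ι.app A : A ⟶ T A`, the colimit cocone leg at stage `0`. -/
noncomputable def tUnit (U : C ⥤ C) (α : 𝟭 C ⟶ U) (A : C) : A ⟶ Tobj U α A :=
  colimit.ι (chain U α A) 0

/-! Since `U` preserves the colimit `T X`, the component `α.app (T X)` is the map induced on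
colimits by `α` whiskered along `ch(X)`. Well-pointedness says that `ch(X) ⋙ U` is `ch(X)`
shifted by one, and under this identification the whiskered `α` becomes the transition map
`ch(X) ⟶ ch(X)(· + 1)`, which induces an isomorphism on colimits because `· + 1` is cofinal
in `ℕ`. For the later stages, `α.app (U Y) = U.map (α.app Y)` is again an isomorphism. -/

namespace CategoryTheory

variable {D : Type*} [Category D]

theorem NatTrans.app_colimit_eq_colimMap {J : Type*} [Category J] {U : D ⥤ D} (α : 𝟭 D ⟶ U)
    (F : J ⥤ D) [HasColimit F] [PreservesColimit F U] :
    α.app (colimit F) = colimMap (Functor.whiskerLeft F α) ≫ (preservesColimitIso U F).inv := by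
  refine colimit.hom_ext fun j => ?_
  simpa using α.naturality (colimit.ι F j)

theorem NatTrans.isIso_app_colimit {J : Type*} [Category J] {U : D ⥤ D} (α : 𝟭 D ⟶ U)
    (F : J ⥤ D) [HasColimit F] [PreservesColimit F U]
    [IsIso (colimMap (Functor.whiskerLeft F α))] : IsIso (α.app (colimit F)) := by
  rw [NatTrans.app_colimit_eq_colimMap]
  infer_instance

def natSucc : ℕ ⥤ ℕ := (add_left_mono (a := 1) : Monotone fun n : ℕ => n + 1).functor

instance : natSucc.Final :=
  (Monotone.final_functor_iff _).2 fun n => ⟨n, n.le_succ⟩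

def toNatSucc (F : ℕ ⥤ D) : F ⟶ natSucc ⋙ F where
  app n := F.map (homOfLE (n.le_add_right 1))
  naturality _ _ _ := by simp only [Functor.comp_map, ← F.map_comp]; rfl

theorem colimMap_toNatSucc_comp_pre (F : ℕ ⥤ D) [HasColimit F] :
    colimMap (toNatSucc F) ≫ colimit.pre F natSucc = 𝟙 _ := by
  refine colimit.hom_ext fun n => ?_
  simp [toNatSucc]

instance isIso_colimMap_toNatSucc (F : ℕ ⥤ D) [HasColimit F] : IsIso (colimMap (toNatSucc F)) :=
  have : IsIso (colimMap (toNatSucc F) ≫ colimit.pre F natSucc) := by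
    rw [colimMap_toNatSucc_comp_pre]; infer_instance
  IsIso.of_isIso_comp_right _ (colimit.pre F natSucc)

end CategoryTheory

variable {D : Type*} [Category D] {U : D ⥤ D} {α : 𝟭 D ⟶ U}

def IsWellPointed (α : 𝟭 D ⟶ U) : Prop :=
  ∀ X : D, U.map (α.app X) = α.app (U.obj X)

theorem chain_map_succ (X : D) (n : ℕ) :
    (chain U α X).map (homOfLE (n.le_add_right 1)) = α.app ((funIter U n).obj X) :=
  Functor.ofSequence_map_homOfLE_succ _ n

def chainSuccHom (hα : IsWellPointed α) (X : D) :
    natSucc ⋙ chain U α X ⟶ chain U α X ⋙ U :=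
  NatTrans.ofSequence (fun n => 𝟙 ((chain U α X).obj (n + 1))) fun n => by
    change (chain U α X).map (homOfLE ((n + 1).le_add_right 1)) ≫ 𝟙 _ =
      𝟙 _ ≫ U.map ((chain U α X).map (homOfLE (n.le_add_right 1)))
    rw [Category.comp_id, Category.id_comp, chain_map_succ, chain_map_succ]
    exact (hα _).symm

instance isIso_chainSuccHom (hα : IsWellPointed α) (X : D) :
    IsIso (chainSuccHom hα X) :=
  have (n : ℕ) : IsIso ((chainSuccHom hα X).app n) := inferInstanceAs (IsIso (𝟙 _))
  NatIso.isIso_of_isIso_app _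

theorem whiskerLeft_chain_eq (hα : IsWellPointed α) (X : D) :
    Functor.whiskerLeft (chain U α X) α = toNatSucc (chain U α X) ≫ chainSuccHom hα X := by
  ext n
  change α.app ((funIter U n).obj X) = (chain U α X).map (homOfLE (n.le_add_right 1)) ≫ 𝟙 _
  rw [Category.comp_id, chain_map_succ]

theorem isIso_app_Tobj [HasColimitsOfShape ℕ D] [PreservesColimitsOfShape ℕ U]
    (hα : IsWellPointed α) (X : D) : IsIso (α.app (Tobj U α X)) :=
  have : IsIso (colimMap (Functor.whiskerLeft (chain U α X) α)) := by
    rw [colimMap_eq, whiskerLeft_chain_eq hα, colim.map_comp]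
    exact IsIso.comp_isIso'
      (inferInstanceAs (IsIso (colimMap (toNatSucc (chain U α X))))) inferInstance
  NatTrans.isIso_app_colimit α (chain U α X)

theorem isIso_app_funIter_obj (hα : IsWellPointed α) {Y : D}
    [IsIso (α.app Y)] : ∀ n, IsIso (α.app ((funIter U n).obj Y))
  | 0 => ‹_›
  | n + 1 => by
    have := isIso_app_funIter_obj hα (Y := Y) n
    change IsIso (α.app (U.obj ((funIter U n).obj Y)))
    rw [← hα]
    infer_instance

/-- For a well-pointed endofunctor `U` with unit `α`, the morphism
`α.app (T X) : T X ⟶ U (T X)` is an isomorphism, and consequently every transition map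
`α.app (Uⁿ (T X)) : Uⁿ (T X) ⟶ Uⁿ⁺¹ (T X)` of the chain `T X ⟶ U (T X) ⟶ U² (T X) ⟶ ⋯`
is an isomorphism. -/
theorem stmt3 (U : C ⥤ C) (α : 𝟭 C ⟶ U)
    [PreservesColimitsOfShape ℕ U]
    (hwp : ∀ X : C, U.map (α.app X) = α.app (U.obj X)) (X : C) :
    IsIso (α.app (Tobj U α X)) ∧
      ∀ n : ℕ, IsIso (α.app ((funIter U n).obj (Tobj U α X))) :=
  have := isIso_app_Tobj hwp X
  ⟨this, isIso_app_funIter_obj hwp⟩
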